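/- Let Θ be an MLL proof net and A, B formula occurrences with B ∉ e_Θ(A) and A ∉ e_Θ(B). Then e_Θ(A) ∩ e_Θ(B) = ∅. -/

import Mathlib

/-- An MLL link: an ID-link (axiom link) with two conclusions,
a tensor link or a par link with two premises and one conclusion. -/
inductive MLLLink (V : Type) where
  | idl (c₁ c₂ : V)
  | tensor (a b c : V)
  | par (a b c : V)
deriving DecidableEq

namespace MLLLink
variable {V V' : Type}

def prems : MLLLink V → List V
  | idl _ _ => []
  | tensor a b _ => [a, b]
  | par a b _ => [a, b]

def concls : MLLLink V → List V
  | idl c₁ c₂ => [c₁, c₂]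
  | tensor _ _ c => [c]
  | par _ _ c => [c]

def isId : MLLLink V → Bool
  | idl _ _ => true
  | _ => false

def isTensor : MLLLink V → Bool
  | tensor _ _ _ => true
  | _ => false

def isPar : MLLLink V → Bool
  | par _ _ _ => true
  | _ => false

/-- Relabel the vertices of a link along a map. -/
def map (f : V → V') : MLLLink V → MLLLink V'
  | idl c₁ c₂ => idl (f c₁) (f c₂)
  | tensor a b c => tensor (f a) (f b) (f c)
  | par a b c => par (f a) (f b) (f c)

/-- Forget whether a multiplicative link is ⊗ or ⅋ (normalizing ⅋ to ⊗). -/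
def forget : MLLLink V → MLLLink V
  | par a b c => tensor a b c
  | L => L

end MLLLink

/-- An MLL proof structure on the set `V` of formula occurrences:
every occurrence is the conclusion of exactly one link and the premise of
at most one link, and the occurrences appearing in a link are distinct. -/
structure MLLProofStructure (V : Type) [DecidableEq V] where
  links : Finset (MLLLink V)
  concl_exists : ∀ v : V, ∃ L ∈ links, v ∈ L.concls
  concl_unique : ∀ v : V, ∀ L ∈ links, ∀ L' ∈ links,
      v ∈ L.concls → v ∈ L'.concls → L = L'
  prem_unique : ∀ v : V, ∀ L ∈ links, ∀ L' ∈ links,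
      v ∈ L.prems → v ∈ L'.prems → L = L'
  nodup : ∀ L ∈ links, (L.prems ++ L.concls).Nodup

variable {V : Type} [DecidableEq V]

/-- The edge generated by a link under a DR-switching `S`
(`S L = true` selects the left premise of a ⅋-link). -/
def switchEdge (S : MLLLink V → Bool) (L : MLLLink V) (v w : V) : Prop :=
  match L with
  | .idl c₁ c₂ => v = c₁ ∧ w = c₂
  | .tensor a b c => (v = a ∧ w = c) ∨ (v = b ∧ w = c)
  | .par a b c =>
      (S (.par a b c) = true ∧ v = a ∧ w = c) ∨
      (S (.par a b c) = false ∧ v = b ∧ w = c)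

def drRel (Θ : MLLProofStructure V) (S : MLLLink V → Bool) (v w : V) : Prop :=
  ∃ L ∈ Θ.links, switchEdge S L v w

/-- The Danos–Regnier graph of a proof structure under a switching. -/
def drGraph (Θ : MLLProofStructure V) (S : MLLLink V → Bool) : SimpleGraph V :=
  SimpleGraph.fromRel (drRel Θ S)

/-- Danos–Regnier criterion: a proof net is a proof structure all of whose
DR-graphs are acyclic and connected. -/
def IsProofNet (Θ : MLLProofStructure V) : Prop :=
  ∀ S : MLLLink V → Bool, (drGraph Θ S).IsAcyclic ∧ (drGraph Θ S).Connected

/-- The edges from `A` down to the conclusion of the link of which `A` is a premise. -/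
def belowEdges (Θ : MLLProofStructure V) (A : V) : Set (Sym2 V) :=
  {e | ∃ L ∈ Θ.links, A ∈ L.prems ∧ ∃ c ∈ L.concls, e = s(A, c)}

/-- The DR-graph with the edge below `A` deleted. -/
def empGraph (Θ : MLLProofStructure V) (S : MLLLink V → Bool) (A : V) : SimpleGraph V :=
  (drGraph Θ S).deleteEdges (belowEdges Θ A)

/-- The vertex set of `Θ_S^A`: the connected component of `A` in the DR-graph
after deleting the edge below `A`. -/
def empComp (Θ : MLLProofStructure V) (S : MLLLink V → Bool) (A : V) : Set V :=
  {v | (empGraph Θ S A).Reachable A v}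

/-- The empire of `A` in `Θ`. -/
def empire (Θ : MLLProofStructure V) (A : V) : Set V :=
  ⋂ S : MLLLink V → Bool, empComp Θ S A

/-- A conclusion of `Θ` is a formula occurrence which is a premise of no link. -/
def IsConclusion (Θ : MLLProofStructure V) (v : V) : Prop :=
  ∀ L ∈ Θ.links, v ∉ L.prems

/-- All premises and conclusions of a link lie in `X`. -/
def allIn (X : Set V) (L : MLLLink V) : Prop :=
  (∀ w ∈ L.prems, w ∈ X) ∧ (∀ w ∈ L.concls, w ∈ X)

/-- `X` together with the links of `Θ` contained in `X` forms a proof structure. -/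
def IsSubProofStructure (Θ : MLLProofStructure V) (X : Set V) : Prop :=
  ∀ v ∈ X, ∃ L ∈ Θ.links, v ∈ L.concls ∧ allIn X L

def subDrRel (Θ : MLLProofStructure V) (X : Set V) (S : MLLLink V → Bool)
    (v w : V) : Prop :=
  ∃ L ∈ Θ.links, allIn X L ∧ switchEdge S L v w

/-- The DR-graph of the substructure of `Θ` induced on `X`. -/
def subDrGraph (Θ : MLLProofStructure V) (X : Set V) (S : MLLLink V → Bool) :
    SimpleGraph V :=
  SimpleGraph.fromRel (subDrRel Θ X S)

/-- `X` is a sub-proof net of `Θ`: it induces a proof structure whose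
DR-graphs are all acyclic and connected (on `X`). -/
def IsSubProofNet (Θ : MLLProofStructure V) (X : Set V) : Prop :=
  IsSubProofStructure Θ X ∧
    ∀ S : MLLLink V → Bool, (subDrGraph Θ X S).IsAcyclic ∧
      ∀ v ∈ X, ∀ w ∈ X, (subDrGraph Θ X S).Reachable v w

/-- `A` is a conclusion of the substructure induced on `X`. -/
def IsConclusionOfSub (Θ : MLLProofStructure V) (X : Set V) (A : V) : Prop :=
  A ∈ X ∧ ∀ L ∈ Θ.links, allIn X L → A ∉ L.prems

/-- `e` is an isomorphism of the underlying link graphs of `Θ₁` and `Θ₂`,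
forgetting the ⊗/⅋ labels: they witness that `Θ₁` and `Θ₂` are in the same PS-family. -/
def FamilyIso {V₁ V₂ : Type} [DecidableEq V₁] [DecidableEq V₂]
    (Θ₁ : MLLProofStructure V₁) (Θ₂ : MLLProofStructure V₂) (e : V₁ ≃ V₂) : Prop :=
  Θ₁.links.image (fun L => (L.map e).forget) = Θ₂.links.image MLLLink.forget

/-- The number of (multiplicative) links at which the ⊗/⅋-labellings of
`Θ₁` and `Θ₂` differ along `e`. -/
def diffCount {V₁ V₂ : Type} [DecidableEq V₁] [DecidableEq V₂]
    (Θ₁ : MLLProofStructure V₁) (Θ₂ : MLLProofStructure V₂) (e : V₁ ≃ V₂) : ℕ :=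
  (Θ₁.links.filter (fun L => L.map e ∉ Θ₂.links)).card

/-!
The empire `e(A)` induces a connected subgraph of every DR-graph `Θ_S`. Granting this, choose
`S` with `A ∉ Θ_S^B`: a path of `Θ_S` inside `e(A)` from `A` to a common vertex `C` avoids `B`,
hence the edge below `B`, so `A ∈ Θ_S^B` after all.

For the connectivity, replace `S` by the switching `S*` that agrees with `S` on ⅋-links concluding
inside `e(A)` and elsewhere selects edges that do not leave `e(A)`. Then every edge of `Θ_{S*}^A`
at a vertex of `e(A)` stays inside `e(A)` and is an edge of `Θ_S`, so the paths of `Θ_{S*}^A`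
from `A` are paths of `Θ_S` inside `e(A)`. That the ⅋-links concluding inside `e(A)` are harmless
is the upward closure of the empire, which follows by exchanging one edge of a tree for another.
-/

namespace SimpleGraph

variable {α : Type*} {G G' H : SimpleGraph α}

theorem sdiff_edge_adj {a c u v : α} :
    (G \ edge a c).Adj u v ↔ G.Adj u v ∧ s(u, v) ≠ s(a, c) := by
  rw [sdiff_adj, adj_edge]
  exact and_congr_right fun h => by simp [h.ne, eq_comm]

theorem Reachable.of_sup_edge {a b x y : α} (h : (H ⊔ edge a b).Reachable x y) :
    H.Reachable x y ∨ H.Reachable x a ∨ H.Reachable x b := by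
  obtain ⟨w⟩ := h
  induction w with
  | nil => exact Or.inl (Reachable.refl _)
  | cons hadj _ ih =>
    rcases (sup_adj _ _ _ _).mp hadj with hH | he
    · exact ih.imp hH.reachable.trans (Or.imp hH.reachable.trans hH.reachable.trans)
    · obtain ⟨⟨rfl, -⟩ | ⟨rfl, -⟩, -⟩ := (edge_adj _ _ _ _).mp he
      · exact Or.inr (Or.inl (Reachable.refl _))
      · exact Or.inr (Or.inr (Reachable.refl _))

theorem Reachable.sdiff_edge_of_not_reachable {u v a c : α} (h : G.Reachable u v)
    (ha : ¬G.Reachable u a) : (G \ edge a c).Reachable u v := by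
  classical
  obtain ⟨w⟩ := h
  refine reachable_deleteEdges_iff_exists_walk.mpr ⟨w, fun he => ha ?_⟩
  exact ⟨w.takeUntil a (w.fst_mem_support_of_mem_edges he)⟩

theorem IsAcyclic.le_of_preconnected_of_le (hG' : G'.IsAcyclic) (hG : G.Preconnected)
    (hle : G ≤ G') : G' ≤ G := by
  intro u v huv
  by_contra hn
  refine isAcyclic_iff_forall_adj_isBridge.mp hG' huv ((hG u v).mono fun x y hxy => ?_)
  refine deleteEdges_adj.mpr ⟨hle hxy, fun he => hn ?_⟩
  rw [← mem_edgeSet, ← Set.mem_singleton_iff.mp he]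
  exact hxy

/-- `G'` is the tree `G` with the edge `q z` exchanged for `p z`. -/
theorem reachable_sdiff_edge_of_exchange (hG : G.Preconnected) (hG' : G'.IsAcyclic)
    {a c p q z : α} (hle : G ≤ G' ⊔ edge q z) (hle' : G' ≤ G ⊔ edge p z)
    (hqz : G.Adj q z) (hpz : G'.Adj p z) (hqe : s(q, z) ≠ s(a, c)) (hpe : s(p, z) ≠ s(a, c))
    (hz : (G \ edge a c).Reachable a z) (hz' : (G' \ edge a c).Reachable a z) :
    (G \ edge a c).Reachable a p := by
  by_contra hp
  set K := G' \ edge p z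
  -- `K` splits into the side of `z`, containing `a` and the edge `a c`, and the side of `p`,
  -- containing `q`.
  have hKG : K ≤ G := sdiff_le_iff.mpr (hle'.trans_eq (sup_comm _ _))
  have hKa : K \ edge a c ≤ G \ edge a c := sdiff_le_sdiff_right hKG
  have hnpz : ¬G.Adj p z := fun h =>
    hp (hz.trans (sdiff_edge_adj.mpr ⟨h.symm, by rwa [Sym2.eq_swap]⟩).reachable)
  have hGK : G ≤ K ⊔ edge q z := by
    intro u v huv
    rcases (sup_adj _ _ _ _).mp (hle huv) with h | h
    · refine Or.inl (sdiff_edge_adj.mpr ⟨h, fun he => hnpz ?_⟩)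
      rw [← mem_edgeSet, ← he]
      exact huv
    · exact Or.inr h
  have hbridge : ¬K.Reachable p z := isAcyclic_iff_forall_adj_isBridge.mp hG' hpz
  have haz : (K \ edge a c).Reachable a z := by
    have : G' \ edge a c ≤ K \ edge a c ⊔ edge p z := by
      rw [sdiff_right_comm, sdiff_sup_self]
      exact le_sup_left
    rcases (hz'.mono this).of_sup_edge with h | h | h
    · exact h
    · exact absurd (h.mono hKa) hp
    · exact h
  have hap : ¬K.Reachable a p := fun h => hbridge (h.symm.trans (haz.mono sdiff_le))
  have hpq : K.Reachable p q := by
    rcases ((hG p z).mono hGK).of_sup_edge with h | h | h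
    · exact absurd h hbridge
    · exact h
    · exact absurd h hbridge
  have hqp : (K \ edge a c).Reachable q p :=
    (hpq.sdiff_edge_of_not_reachable fun h => hap h.symm).symm
  exact hp ((hz.trans (sdiff_edge_adj.mpr ⟨hqz.symm, by rwa [Sym2.eq_swap]⟩).reachable).trans
    (hqp.mono hKa))

theorem preconnected_induce_of_reachable {X : Set α} {x : α}
    (hX : ∀ ⦃u v⦄, H.Adj u v → u ∈ X → v ∈ X ∧ G.Adj u v) (hx : x ∈ X)
    (hreach : ∀ v ∈ X, H.Reachable x v) : (G.induce X).Preconnected := by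
  have key : ∀ {u v} (w : H.Walk u v) (hu : u ∈ X),
      ∃ hv : v ∈ X, (G.induce X).Reachable ⟨u, hu⟩ ⟨v, hv⟩ := by
    intro u v w
    induction w with
    | nil => exact fun hu => ⟨hu, Reachable.refl _⟩
    | cons hadj _ ih =>
      intro hu
      obtain ⟨hm, hG⟩ := hX hadj hu
      obtain ⟨hv, hr⟩ := ih hm
      exact ⟨hv, (induce_adj.mpr hG).reachable.trans hr⟩
  have hfrom : ∀ v (hv : v ∈ X), (G.induce X).Reachable ⟨x, hx⟩ ⟨v, hv⟩ := fun v hv =>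
    (key (hreach v hv).some hx).2
  rintro ⟨u, hu⟩ ⟨v, hv⟩
  exact (hfrom u hu).symm.trans (hfrom v hv)

end SimpleGraph

open SimpleGraph

section Switchings

variable {α : Type} {S S' : MLLLink α → Bool} {L : MLLLink α} {a b z p u v : α}

theorem eq_of_mem_concls_of_mem_prems (hp : p ∈ L.prems) (hz : z ∈ L.concls)
    (hu : u ∈ L.concls) : u = z := by
  cases L <;> simp_all [MLLLink.prems, MLLLink.concls]

theorem switchEdge_congr (h : S L = S' L) : switchEdge S L = switchEdge S' L := by
  cases L with
  | par a b c => funext u v; simp only [switchEdge, h]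
  | _ => rfl

theorem switchEdge_par :
    switchEdge S (.par a b z) u v ↔ u = (if S (.par a b z) then a else b) ∧ v = z := by
  cases h : S (.par a b z) <;> simp [switchEdge, h]

theorem switchEdge_mem (h : switchEdge S L u v) :
    (u ∈ L.prems ∨ u ∈ L.concls) ∧ v ∈ L.concls := by
  cases L <;> simp only [switchEdge] at h <;>
    aesop (add norm simp [MLLLink.prems, MLLLink.concls])

end Switchings

section DRGraphs

variable {Θ : MLLProofStructure V} {S S' : MLLLink V → Bool} {L : MLLLink V}
  {a b z p u v x y : V}

theorem ne_of_mem_prems_of_mem_concls (hL : L ∈ Θ.links) (hp : p ∈ L.prems)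
    (hz : z ∈ L.concls) : p ≠ z := by
  rintro rfl
  exact List.disjoint_of_nodup_append (Θ.nodup L hL) hp hz

theorem switchEdge_ne (hL : L ∈ Θ.links) (h : switchEdge S L u v) : u ≠ v := by
  have := Θ.nodup L hL
  cases L <;> simp only [switchEdge] at h <;>
    aesop (add norm simp [MLLLink.prems, MLLLink.concls])

theorem exists_update_switchEdge (S : MLLLink V → Bool) (hp : p ∈ L.prems)
    (hz : z ∈ L.concls) : ∃ S', (∀ L' ≠ L, S' L' = S L') ∧ switchEdge S' L p z := by
  cases L with
  | idl => simp [MLLLink.prems] at hp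
  | tensor a b c =>
    refine ⟨S, fun _ _ => rfl, ?_⟩
    simp_all [switchEdge, MLLLink.prems, MLLLink.concls]
  | par a b c =>
    refine ⟨Function.update S (.par a b c) (decide (p = a)),
      fun L' hL' => Function.update_of_ne hL' _ _, ?_⟩
    simp only [MLLLink.prems, MLLLink.concls, List.mem_cons, List.not_mem_nil, or_false] at hp hz
    rw [switchEdge_par, Function.update_self]
    by_cases hpa : p = a <;> simp_all

theorem drGraph_adj_of_switchEdge (hL : L ∈ Θ.links) (h : switchEdge S L x y)
    (he : s(x, y) = s(u, v)) : (drGraph Θ S).Adj u v := by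
  rw [← mem_edgeSet, ← he]
  exact (fromRel_adj ..).mpr ⟨switchEdge_ne hL h, Or.inl ⟨L, hL, h⟩⟩

theorem exists_switchEdge_of_adj (h : (drGraph Θ S).Adj u v) :
    ∃ L ∈ Θ.links, ∃ x y, switchEdge S L x y ∧ s(x, y) = s(u, v) := by
  obtain ⟨-, ⟨L, hL, h⟩ | ⟨L, hL, h⟩⟩ := (fromRel_adj ..).mp h
  · exact ⟨L, hL, u, v, h, rfl⟩
  · exact ⟨L, hL, v, u, h, Sym2.eq_swap⟩

theorem drGraph_le_sup_edge (hS : ∀ L ≠ .par a b z, S' L = S L)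
    (hp : switchEdge S' (.par a b z) p z) : drGraph Θ S' ≤ drGraph Θ S ⊔ edge p z := by
  intro u v huv
  obtain ⟨L, hL, x, y, hxy, he⟩ := exists_switchEdge_of_adj huv
  by_cases hLℓ : L = .par a b z
  · subst hLℓ
    rw [switchEdge_par] at hxy hp
    rw [hxy.1, hxy.2, ← hp.1] at he
    exact Or.inr ((adj_edge ..).mpr ⟨he, huv.ne⟩)
  · rw [switchEdge_congr (hS L hLℓ)] at hxy
    exact Or.inl (drGraph_adj_of_switchEdge hL hxy he)

end DRGraphs

section Empires

variable {Θ : MLLProofStructure V} {S : MLLLink V → Bool} {A B c a b z p u v : V}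

theorem mem_empire_self : A ∈ empire Θ A :=
  Set.mem_iInter.mpr fun _ => Reachable.refl _

theorem mem_empire_of_forall_adj (h : ∀ S, ∃ u ∈ empire Θ A, (empGraph Θ S A).Adj u v) :
    v ∈ empire Θ A :=
  Set.mem_iInter.mpr fun S =>
    let ⟨_, hu, huv⟩ := h S
    (Set.mem_iInter.mp hu S).trans huv.reachable

theorem mem_of_mem_belowEdges {e : Sym2 V} (he : e ∈ belowEdges Θ B) : B ∈ e := by
  obtain ⟨_, _, _, _, _, rfl⟩ := he
  exact Sym2.mem_mk_left _ _

theorem empire_eq_univ (hΘ : IsProofNet Θ) (hA : IsConclusion Θ A) :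
    empire Θ A = Set.univ := by
  have hbelow : belowEdges Θ A = ∅ :=
    Set.eq_empty_of_forall_notMem fun _ ⟨L, hL, hAL, _⟩ => hA L hL hAL
  refine Set.eq_univ_of_forall fun v => Set.mem_iInter.mpr fun S => ?_
  change (empGraph Θ S A).Reachable A v
  rw [empGraph, hbelow, deleteEdges_empty]
  exact (hΘ S).2.preconnected A v

theorem concl_mem_empire_of_prems_mem (hℓ : .par a b z ∈ Θ.links) (ha : a ∈ empire Θ A)
    (hb : b ∈ empire Θ A) (haz : s(a, z) ∉ belowEdges Θ A)
    (hbz : s(b, z) ∉ belowEdges Θ A) : z ∈ empire Θ A :=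
  mem_empire_of_forall_adj fun S => by
    cases h : S (.par a b z)
    · exact ⟨b, hb, deleteEdges_adj.mpr
        ⟨drGraph_adj_of_switchEdge hℓ (Or.inr ⟨h, rfl, rfl⟩) rfl, hbz⟩⟩
    · exact ⟨a, ha, deleteEdges_adj.mpr
        ⟨drGraph_adj_of_switchEdge hℓ (Or.inl ⟨h, rfl, rfl⟩) rfl, haz⟩⟩

theorem belowEdges_eq_singleton (hAc : s(A, c) ∈ belowEdges Θ A) :
    belowEdges Θ A = {s(A, c)} := by
  obtain ⟨LA, hLA, hALA, c', hc', he⟩ := hAc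
  refine Set.eq_singleton_iff_unique_mem.mpr ⟨⟨LA, hLA, hALA, c', hc', he⟩, ?_⟩
  rintro _ ⟨L, hL, hAL, d, hd, rfl⟩
  rw [Θ.prem_unique A L hL LA hLA hAL hALA] at hd
  rw [Sym2.congr_right.mp he, eq_of_mem_concls_of_mem_prems hALA hc' hd]

theorem empGraph_eq_sdiff_edge (hAc : s(A, c) ∈ belowEdges Θ A) :
    empGraph Θ S A = drGraph Θ S \ edge A c := by
  rw [empGraph, belowEdges_eq_singleton hAc]
  rfl

end Empires

section BelowEdge

variable {Θ : MLLProofStructure V} {A c a b z p : V}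

theorem exists_link_of_mem_belowEdges (hAc : s(A, c) ∈ belowEdges Θ A) :
    ∃ L ∈ Θ.links, A ∈ L.prems ∧ c ∈ L.concls := by
  obtain ⟨L, hL, hAL, c', hc', he⟩ := hAc
  exact ⟨L, hL, hAL, Sym2.congr_right.mp he ▸ hc'⟩

theorem notMem_empire_of_mem_belowEdges (hΘ : IsProofNet Θ) (hAc : s(A, c) ∈ belowEdges Θ A) :
    c ∉ empire Θ A := by
  obtain ⟨LA, hLA, hALA, hcLA⟩ := exists_link_of_mem_belowEdges hAc
  obtain ⟨S, -, hS⟩ := exists_update_switchEdge (fun _ => true) hALA hcLA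
  intro hc
  have hAc' : (drGraph Θ S \ edge A c).Reachable A c := by
    rw [← empGraph_eq_sdiff_edge hAc]
    exact Set.mem_iInter.mp hc S
  exact isAcyclic_iff_forall_adj_isBridge.mp (hΘ S).1
    (drGraph_adj_of_switchEdge hLA hS rfl) hAc'

/-- Otherwise a switching would see the edge `A c` twice, and flipping the ⅋-link would add an
edge to a tree. -/
theorem notMem_prems_of_mem_belowEdges (hΘ : IsProofNet Θ) (hAc : s(A, c) ∈ belowEdges Θ A)
    (hℓ : .par a b A ∈ Θ.links) : c ∉ (MLLLink.par a b A).prems := by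
  intro hcℓ
  obtain ⟨LA, hLA, hALA, hcLA⟩ := exists_link_of_mem_belowEdges hAc
  have hAℓ : A ∈ (MLLLink.par a b A).concls := List.mem_singleton_self A
  have hne : LA ≠ .par a b A := fun h => ne_of_mem_prems_of_mem_concls hLA hALA (h ▸ hAℓ) rfl
  obtain ⟨q, hqℓ, hqc⟩ : ∃ q ∈ (MLLLink.par a b A).prems, q ≠ c := by
    have hab : a ≠ b := by
      simpa [MLLLink.prems, MLLLink.concls] using List.nodup_append.mp (Θ.nodup _ hℓ) |>.1
    rcases List.mem_pair.mp hcℓ with rfl | rfl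
    · exact ⟨b, List.mem_pair.mpr (Or.inr rfl), hab.symm⟩
    · exact ⟨a, List.mem_pair.mpr (Or.inl rfl), hab⟩
  obtain ⟨S₀, -, hS₀⟩ := exists_update_switchEdge (fun _ => true) hALA hcLA
  obtain ⟨S, hSS₀, hSc⟩ := exists_update_switchEdge S₀ hcℓ hAℓ
  obtain ⟨S', hS'S, hS'q⟩ := exists_update_switchEdge S hqℓ hAℓ
  have hS'LA : switchEdge S' LA A c := by
    rwa [switchEdge_congr (hS'S LA hne), switchEdge_congr (hSS₀ LA hne)]
  have hle : drGraph Θ S ≤ drGraph Θ S' := by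
    have := drGraph_le_sup_edge (Θ := Θ) (fun L h => (hS'S L h).symm) hSc
    rwa [sup_edge_of_adj _ (drGraph_adj_of_switchEdge hLA hS'LA Sym2.eq_swap)] at this
  have hqA : (drGraph Θ S).Adj q A :=
    (hΘ S').1.le_of_preconnected_of_le (hΘ S).2.preconnected hle
      (drGraph_adj_of_switchEdge hℓ hS'q rfl)
  obtain ⟨L, hL, x, y, hxy, he⟩ := exists_switchEdge_of_adj hqA
  obtain ⟨hx, hy⟩ := switchEdge_mem hxy
  rcases Sym2.eq_iff.mp he with ⟨rfl, rfl⟩ | ⟨rfl, rfl⟩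
  · obtain rfl := Θ.concl_unique _ L hL _ hℓ hy hAℓ
    rw [switchEdge_par] at hxy hSc
    exact hqc (hxy.1.trans hSc.1.symm)
  · rcases hx with hx | hx
    · rw [Θ.prem_unique _ L hL LA hLA hx hALA] at hy
      exact hqc (eq_of_mem_concls_of_mem_prems hALA hcLA hy)
    · obtain rfl := Θ.concl_unique _ L hL _ hℓ hx hAℓ
      exact ne_of_mem_prems_of_mem_concls hℓ hqℓ hy rfl

theorem prem_mem_empire_of_concl_mem (hΘ : IsProofNet Θ) (hAc : s(A, c) ∈ belowEdges Θ A)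
    (hℓ : .par a b z ∈ Θ.links) (hp : p ∈ (MLLLink.par a b z).prems) (hz : z ∈ empire Θ A)
    (hpz : s(p, z) ∉ belowEdges Θ A) : p ∈ empire Θ A := by
  have hzℓ : z ∈ (MLLLink.par a b z).concls := List.mem_singleton_self z
  refine Set.mem_iInter.mpr fun S => ?_
  change (empGraph Θ S A).Reachable A p
  have hzS : (empGraph Θ S A).Reachable A z := Set.mem_iInter.mp hz S
  obtain ⟨q, hqℓ, hq⟩ :
      ∃ q ∈ (MLLLink.par a b z).prems, switchEdge S (.par a b z) q z := by
    cases h : S (.par a b z)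
    · exact ⟨b, by simp [MLLLink.prems], Or.inr ⟨h, rfl, rfl⟩⟩
    · exact ⟨a, by simp [MLLLink.prems], Or.inl ⟨h, rfl, rfl⟩⟩
  by_cases hqp : q = p
  · subst hqp
    exact hzS.trans (deleteEdges_adj.mpr
      ⟨drGraph_adj_of_switchEdge hℓ hq Sym2.eq_swap, by rwa [Sym2.eq_swap]⟩).reachable
  obtain ⟨S', hS'S, hp'⟩ := exists_update_switchEdge S hp hzℓ
  have hzS' : (empGraph Θ S' A).Reachable A z := Set.mem_iInter.mp hz S'
  rw [empGraph_eq_sdiff_edge hAc] at hzS hzS' ⊢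
  refine reachable_sdiff_edge_of_exchange (hΘ S).2.preconnected (hΘ S').1
    (drGraph_le_sup_edge (fun L h => (hS'S L h).symm) hq) (drGraph_le_sup_edge hS'S hp')
    (drGraph_adj_of_switchEdge hℓ hq rfl) (drGraph_adj_of_switchEdge hℓ hp' rfl) ?_
    (fun h => hpz (h ▸ hAc)) hzS hzS'
  intro h
  rcases Sym2.eq_iff.mp h with ⟨rfl, rfl⟩ | ⟨rfl, rfl⟩
  · exact notMem_empire_of_mem_belowEdges hΘ hAc hz
  · exact notMem_prems_of_mem_belowEdges hΘ hAc hℓ hqℓ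

end BelowEdge

open Classical in
/-- Agrees with `S` on the ⅋-links concluding inside the empire of `A`; on the others, no selected
edge other than the one below `A` leaves the empire. -/
noncomputable def adaptedSwitching (Θ : MLLProofStructure V) (A : V) (S : MLLLink V → Bool) :
    MLLLink V → Bool
  | .par a b z =>
    if z ∈ empire Θ A then S (.par a b z)
    else decide (a ∉ empire Θ A ∨ s(a, z) ∈ belowEdges Θ A)
  | L => S L

section AdaptedSwitching

variable {Θ : MLLProofStructure V} {S : MLLLink V → Bool} {A c a b z p u v : V}

theorem mem_empire_iff_of_adaptedSwitching (hΘ : IsProofNet Θ) (hAc : s(A, c) ∈ belowEdges Θ A)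
    (hℓ : .par a b z ∈ Θ.links) (hp : switchEdge (adaptedSwitching Θ A S) (.par a b z) p z)
    (hpz : s(p, z) ∉ belowEdges Θ A) : p ∈ empire Θ A ↔ z ∈ empire Θ A := by
  by_cases hz : z ∈ empire Θ A
  · refine iff_of_true (prem_mem_empire_of_concl_mem hΘ hAc hℓ ?_ hz hpz) hz
    exact (switchEdge_mem hp).1.resolve_right fun h =>
      switchEdge_ne hℓ hp (List.mem_singleton.mp h)
  · refine iff_of_false (fun hpE => hz ?_) hz
    rw [switchEdge_par] at hp
    simp only [adaptedSwitching, hz, if_false] at hp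
    split_ifs at hp with h <;> obtain ⟨rfl, -⟩ := hp
    · simp only [decide_eq_true_eq] at h
      rcases h with h | h
      exacts [absurd hpE h, absurd h hpz]
    · simp only [decide_eq_true_eq, not_or, not_not] at h
      exact concl_mem_empire_of_prems_mem hℓ h.1 hpE h.2 hpz

theorem mem_empire_of_adj_adaptedSwitching (hΘ : IsProofNet Θ) (hAc : s(A, c) ∈ belowEdges Θ A)
    (huv : (empGraph Θ (adaptedSwitching Θ A S) A).Adj u v) (hu : u ∈ empire Θ A) :
    v ∈ empire Θ A := by
  obtain ⟨hadj, hnb⟩ := deleteEdges_adj.mp huv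
  obtain ⟨L, hL, x, y, hxy, he⟩ := exists_switchEdge_of_adj hadj
  cases L with
  | par a b z =>
    obtain rfl := (switchEdge_par.mp hxy).2
    have key := mem_empire_iff_of_adaptedSwitching hΘ hAc hL hxy (he ▸ hnb)
    rcases Sym2.eq_iff.mp he with ⟨rfl, rfl⟩ | ⟨rfl, rfl⟩
    exacts [key.mp hu, key.mpr hu]
  | _ =>
    exact mem_empire_of_forall_adj fun _ =>
      ⟨u, hu, deleteEdges_adj.mpr ⟨drGraph_adj_of_switchEdge hL hxy he, hnb⟩⟩

theorem drGraph_adj_of_adaptedSwitching (huv : (drGraph Θ (adaptedSwitching Θ A S)).Adj u v)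
    (hu : u ∈ empire Θ A) (hv : v ∈ empire Θ A) : (drGraph Θ S).Adj u v := by
  obtain ⟨L, hL, x, y, hxy, he⟩ := exists_switchEdge_of_adj huv
  refine drGraph_adj_of_switchEdge hL ?_ he
  cases L with
  | par a b z =>
    obtain rfl := (switchEdge_par.mp hxy).2
    have hz : y ∈ empire Θ A := by
      rcases Sym2.mem_iff.mp (he ▸ Sym2.mem_mk_right x y) with rfl | rfl
      exacts [hu, hv]
    rwa [switchEdge_congr (show adaptedSwitching Θ A S _ = S _ by simp [adaptedSwitching, hz])]
      at hxy
  | _ => exact hxy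

end AdaptedSwitching

theorem preconnected_induce_empire {Θ : MLLProofStructure V} (hΘ : IsProofNet Θ) (A : V)
    (S : MLLLink V → Bool) : ((drGraph Θ S).induce (empire Θ A)).Preconnected := by
  by_cases hA : IsConclusion Θ A
  · refine preconnected_induce_of_reachable (H := drGraph Θ S) (fun u v huv _ => ?_)
      mem_empire_self fun v _ => (hΘ S).2.preconnected A v
    exact ⟨empire_eq_univ hΘ hA ▸ Set.mem_univ v, huv⟩
  · obtain ⟨LA, hLA, hALA⟩ : ∃ L ∈ Θ.links, A ∈ L.prems := by
      simpa [IsConclusion] using hA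
    obtain ⟨c, hc⟩ : ∃ c, c ∈ LA.concls := by
      cases LA <;> simp_all [MLLLink.prems, MLLLink.concls]
    have hAc : s(A, c) ∈ belowEdges Θ A := ⟨LA, hLA, hALA, c, hc, rfl⟩
    refine preconnected_induce_of_reachable (H := empGraph Θ (adaptedSwitching Θ A S) A)
      (fun u v huv hu => ?_) mem_empire_self fun v hv => Set.mem_iInter.mp hv _
    have hv := mem_empire_of_adj_adaptedSwitching hΘ hAc huv hu
    exact ⟨hv, drGraph_adj_of_adaptedSwitching (deleteEdges_adj.mp huv).1 hu hv⟩

/-- If `B ∉ e_Θ(A)` and `A ∉ e_Θ(B)` then the two empires are disjoint. -/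
theorem empires_disjoint_of_not_mem (Θ : MLLProofStructure V) (hΘ : IsProofNet Θ)
    (A B : V) (hB : B ∉ empire Θ A) (hA : A ∉ empire Θ B) :
    empire Θ A ∩ empire Θ B = ∅ := by
  refine Set.eq_empty_of_forall_notMem fun C ⟨hCA, hCB⟩ => ?_
  obtain ⟨S, hS⟩ : ∃ S, A ∉ empComp Θ S B := by simpa [empire] using hA
  let f : (drGraph Θ S).induce (empire Θ A) →g empGraph Θ S B :=
    { toFun := Subtype.val
      map_rel' := fun {u v} huv => deleteEdges_adj.mpr ⟨huv, fun h => by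
        rcases Sym2.mem_iff.mp (mem_of_mem_belowEdges h) with h | h
        exacts [hB (h ▸ u.2), hB (h ▸ v.2)]⟩ }
  have hAC := (preconnected_induce_empire hΘ A S ⟨A, mem_empire_self⟩ ⟨C, hCA⟩).map f
  exact hS ((Set.mem_iInter.mp hCB S).trans hAC.symm)
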